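/- arXiv:2501.00362 — 2 statements merged into one kernel-verified Lean document; each statement's English description precedes it below -/
import Mathlib

section
/- Let U be uniformly distributed on (0,1), 0 < β < α, and let g:(0,1)→ℝ be differentiable with g bounded and g' integrable against the density f_{Z^L}(x) = ((α+1)(β+1)/(α−β))((1−x)^{1/α} − (1−x)^{1/β}). Then E[((1−U)^{1/β − 1}/β − (1−U)^{1/α − 1}/α)(g(1) − g(U))] = E[g'(Z^L)] · (α−β)/((α+1)(β+1)), where Z^L has density f_{Z^L} and g(1) is the limit of g at 1. -/
open Set intervalIntegral MeasureTheory Filter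

/-- Quantile-based PMVT for the proportional hazard rate model on uniform
`(0,1)`, expressed as an identity of integrals over `(0,1)`. -/
theorem phr_uniform_pmvt
    (α β : ℝ) (hβ : 0 < β) (hβα : β < α)
    (g g' : ℝ → ℝ) (g1 : ℝ)
    (hg : ∀ u ∈ Ioo (0:ℝ) 1, HasDerivAt g (g' u) u)
    (hgbdd : ∃ C, ∀ u ∈ Ioo (0:ℝ) 1, |g u| ≤ C)
    (hg1 : Filter.Tendsto g (nhdsWithin 1 (Iio 1)) (nhds g1))
    (f : ℝ → ℝ)
    (hf : ∀ x, f x = ((α + 1) * (β + 1) / (α - β)) *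
      ((1 - x) ^ (1/α) - (1 - x) ^ (1/β)))
    (hint : IntervalIntegrable (fun x => g' x * f x) MeasureTheory.volume 0 1) :
    (∫ u in (0:ℝ)..1,
        ((1 - u) ^ (1/β - 1) / β - (1 - u) ^ (1/α - 1) / α) * (g1 - g u)) =
      (∫ x in (0:ℝ)..1, g' x * f x) * ((α - β) / ((α + 1) * (β + 1))) := by
  obtain ⟨C, hC⟩ := hgbdd
  have hα : 0 < α := hβ.trans hβα
  set c : ℝ := (α - β) / ((α + 1) * (β + 1)) with hcdef
  have hcpos : 0 < c := by
    apply div_pos (by linarith) (by nlinarith)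
  set w : ℝ → ℝ := fun u => (1 - u) ^ (1/β - 1) / β - (1 - u) ^ (1/α - 1) / α with hw
  set H : ℝ → ℝ := fun u => (1 - u) ^ (1/α) - (1 - u) ^ (1/β) with hH
  set Φ : ℝ → ℝ := fun u => H u * (g1 - g u) with hΦ
  have hHf : ∀ x, H x = c * f x := by
    intro x
    rw [hf x, hcdef]
    have h1 : (α:ℝ) + 1 ≠ 0 := by linarith
    have h2 : (β:ℝ) + 1 ≠ 0 := by linarith
    have h3 : α - β ≠ 0 := by linarith
    field_simp
    ring
  -- derivative of H
  have hHderiv : ∀ u ∈ Ioo (0:ℝ) 1, HasDerivAt H (w u) u := by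
    intro u hu
    have hpos : (0:ℝ) < 1 - u := by linarith [hu.2]
    have hinner : HasDerivAt (fun x : ℝ => 1 - x) (-1) u := by
      simpa using (hasDerivAt_id u).const_sub 1
    have ha : HasDerivAt (fun x : ℝ => (1 - x) ^ (1/α))
        ((1/α * (1 - u) ^ (1/α - 1)) * (-1)) u :=
      (Real.hasDerivAt_rpow_const (Or.inl hpos.ne')).comp u hinner
    have hb : HasDerivAt (fun x : ℝ => (1 - x) ^ (1/β))
        ((1/β * (1 - u) ^ (1/β - 1)) * (-1)) u :=
      (Real.hasDerivAt_rpow_const (Or.inl hpos.ne')).comp u hinner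
    have := ha.sub hb
    refine this.congr_deriv ?_
    rw [hw]
    ring
  have hΦderiv : ∀ u ∈ Ioo (0:ℝ) 1,
      HasDerivAt Φ (w u * (g1 - g u) - H u * g' u) u := by
    intro u hu
    have := (hHderiv u hu).mul ((hg u hu).const_sub g1)
    refine this.congr_deriv ?_
    ring
  have hgcont : ContinuousOn g (Ioo 0 1) :=
    fun u hu => ((hg u hu).continuousAt).continuousWithinAt
  -- bound on g1
  have hg1C : |g1| ≤ C := by
    have hne : (nhdsWithin (1:ℝ) (Iio 1)).NeBot := by infer_instance
    refine le_of_tendsto (hg1.abs) ?_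
    filter_upwards [Ioo_mem_nhdsLT_of_mem (show (1:ℝ) ∈ Ioc (0:ℝ) 1 by constructor <;> norm_num)]
      with x hx using hC x hx
  -- integrability of the left integrand on Ioo 0 1
  have hwInt : IntervalIntegrable w MeasureTheory.volume 0 1 := by
    have hb' : (-1:ℝ) < 1/β - 1 := by
      have : 0 < 1/β := by positivity
      linarith
    have ha' : (-1:ℝ) < 1/α - 1 := by
      have : 0 < 1/α := by positivity
      linarith
    have h1 : IntervalIntegrable (fun x : ℝ => (1 - x) ^ (1/β - 1)) MeasureTheory.volume 0 1 := by
      have := (intervalIntegrable_rpow' (a := 0) (b := 1) hb').comp_sub_left 1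
      simpa using this.symm
    have h2 : IntervalIntegrable (fun x : ℝ => (1 - x) ^ (1/α - 1)) MeasureTheory.volume 0 1 := by
      have := (intervalIntegrable_rpow' (a := 0) (b := 1) ha').comp_sub_left 1
      simpa using this.symm
    exact (h1.div_const β).sub (h2.div_const α)
  have hwIntOn : IntegrableOn w (Ioo 0 1) MeasureTheory.volume :=
    ((intervalIntegrable_iff_integrableOn_Ioc_of_le (by norm_num)).mp hwInt).mono_set
      Ioo_subset_Ioc_self
  have hmeas : AEStronglyMeasurable (fun u => g1 - g u)
      (MeasureTheory.volume.restrict (Ioo (0:ℝ) 1)) :=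
    (continuousOn_const.sub hgcont).aestronglyMeasurable measurableSet_Ioo
  have hLInt : IntegrableOn (fun u => w u * (g1 - g u)) (Ioo 0 1) MeasureTheory.volume := by
    have hbd : ∀ᵐ x ∂ (MeasureTheory.volume.restrict (Ioo (0:ℝ) 1)),
        ‖g1 - g x‖ ≤ |g1| + C := by
      filter_upwards [ae_restrict_mem measurableSet_Ioo] with x hx
      calc ‖g1 - g x‖ ≤ |g1| + |g x| := abs_sub _ _
        _ ≤ |g1| + C := by linarith [hC x hx]
    have := hwIntOn.bdd_mul (c := |g1| + C) hmeas hbd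
    simpa [mul_comm, IntegrableOn] using this
  -- integrability of g' * f on Ioo 0 1
  have hRInt : IntegrableOn (fun x => g' x * f x) (Ioo 0 1) MeasureTheory.volume :=
    ((intervalIntegrable_iff_integrableOn_Ioc_of_le (by norm_num)).mp hint).mono_set
      Ioo_subset_Ioc_self
  -- FTC on compact subintervals
  have key : ∀ a b : ℝ, 0 < a → a ≤ b → b < 1 →
      (∫ u in a..b, w u * (g1 - g u)) =
        (Φ b - Φ a) + (∫ x in a..b, g' x * f x) * c := by
    intro a b ha hab hb
    have hsub : Icc a b ⊆ Ioo (0:ℝ) 1 := fun x hx => ⟨lt_of_lt_of_le ha hx.1,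
      lt_of_le_of_lt hx.2 hb⟩
    have hIocsub : Ioc a b ⊆ Ioo (0:ℝ) 1 := fun x hx =>
      ⟨ha.trans hx.1, lt_of_le_of_lt hx.2 hb⟩
    have hL : IntervalIntegrable (fun u => w u * (g1 - g u)) MeasureTheory.volume a b :=
      (intervalIntegrable_iff_integrableOn_Ioc_of_le hab).mpr (hLInt.mono_set hIocsub)
    have hR : IntervalIntegrable (fun x => g' x * f x) MeasureTheory.volume a b :=
      (intervalIntegrable_iff_integrableOn_Ioc_of_le hab).mpr (hRInt.mono_set hIocsub)
    have hHg' : (fun x => H x * g' x) = fun x => c * (g' x * f x) := by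
      funext x; rw [hHf x]; ring
    have hHgInt : IntervalIntegrable (fun x => H x * g' x) MeasureTheory.volume a b := by
      rw [hHg']
      exact hR.const_mul c
    have hDint : IntervalIntegrable (fun u => w u * (g1 - g u) - H u * g' u)
        MeasureTheory.volume a b := hL.sub hHgInt
    have hftc := integral_eq_sub_of_hasDerivAt
      (f := Φ) (f' := fun u => w u * (g1 - g u) - H u * g' u) (a := a) (b := b)
      (fun x hx => hΦderiv x (hsub ((uIcc_of_le hab) ▸ hx))) hDint
    have hsplit : (∫ u in a..b, (w u * (g1 - g u) - H u * g' u)) =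
        (∫ u in a..b, w u * (g1 - g u)) - ∫ u in a..b, H u * g' u :=
      integral_sub hL hHgInt
    have hcH : (∫ u in a..b, H u * g' u) = (∫ x in a..b, g' x * f x) * c := by
      rw [hHg', intervalIntegral.integral_const_mul]
      ring
    rw [hsplit, hcH] at hftc
    linarith [hftc]
  -- the exhausting sequence
  set u : ℕ → ℝ := fun n => 1 / ((n : ℝ) + 2) with hudef
  set v : ℕ → ℝ := fun n => 1 - 1 / ((n : ℝ) + 2) with hvdef
  have hupos : ∀ n, 0 < u n := fun n => by positivity
  have huhalf : ∀ n, u n ≤ 1/2 := by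
    intro n
    rw [hudef]
    rw [div_le_div_iff₀ (by positivity) (by norm_num)]
    have : (0:ℝ) ≤ (n:ℝ) := Nat.cast_nonneg n
    linarith
  have huv : ∀ n, u n ≤ v n := fun n => by
    have := huhalf n; rw [hvdef]; dsimp only; linarith
  have hv1 : ∀ n, v n < 1 := fun n => by
    have := hupos n; rw [hvdef]; dsimp only; linarith
  have hulim : Tendsto u atTop (nhds 0) := by
    have h1 : Tendsto (fun n : ℕ => ((n : ℝ) + 2)) atTop atTop :=
      tendsto_atTop_add_const_right atTop 2 tendsto_natCast_atTop_atTop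
    simpa [hudef, one_div, Pi.inv_def] using h1.inv_tendsto_atTop
  have hvlim : Tendsto v atTop (nhds 1) := by
    have := (tendsto_const_nhds : Filter.Tendsto (fun _ : ℕ => (1:ℝ)) atTop (nhds 1)).sub hulim
    simpa [hvdef, hudef] using this
  have hmono : Monotone (fun n => Ioo (u n) (v n)) := by
    intro n m hnm
    apply Ioo_subset_Ioo
    · rw [hudef]
      have hcast : ((n:ℝ)) ≤ (m:ℝ) := Nat.cast_le.mpr hnm
      apply div_le_div_of_nonneg_left (by norm_num) (by positivity)
      linarith
    · rw [hvdef]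
      dsimp only
      have hcast : ((n:ℝ)) ≤ (m:ℝ) := Nat.cast_le.mpr hnm
      have : (1:ℝ) / ((m:ℝ) + 2) ≤ 1 / ((n:ℝ) + 2) := by
        apply div_le_div_of_nonneg_left (by norm_num) (by positivity)
        linarith
      linarith
  have hunion : (⋃ n, Ioo (u n) (v n)) = Ioo (0:ℝ) 1 := by
    apply Subset.antisymm
    · exact iUnion_subset fun n => Ioo_subset_Ioo (hupos n).le (hv1 n).le
    · intro x hx
      have hx1 : 0 < x := hx.1
      have hx2 : 0 < 1 - x := by linarith [hx.2]
      set ε := min x (1 - x) with hε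
      have hεpos : 0 < ε := lt_min hx1 hx2
      obtain ⟨n, hn⟩ := exists_nat_gt (1 / ε)
      refine mem_iUnion.mpr ⟨n, ?_⟩
      have hn2 : 1 / ε < (n:ℝ) + 2 := by linarith [hn]
      have hun : u n < ε := by
        rw [hudef]
        rw [div_lt_iff₀ (by positivity)]
        rw [div_lt_iff₀ hεpos] at hn2
        linarith
      constructor
      · exact hun.trans_le (min_le_left _ _)
      · rw [hvdef]
        dsimp only
        have : u n < 1 - x := hun.trans_le (min_le_right _ _)
        rw [hudef] at this
        linarith
  -- limits of the integrals
  have htendL : Tendsto (fun n => ∫ x in Ioo (u n) (v n), w x * (g1 - g x))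
      atTop (nhds (∫ x in Ioo (0:ℝ) 1, w x * (g1 - g x))) := by
    have := tendsto_setIntegral_of_monotone (μ := MeasureTheory.volume)
      (f := fun x => w x * (g1 - g x))
      (fun n => measurableSet_Ioo) hmono (hunion ▸ hLInt)
    rwa [hunion] at this
  have htendR : Tendsto (fun n => ∫ x in Ioo (u n) (v n), g' x * f x)
      atTop (nhds (∫ x in Ioo (0:ℝ) 1, g' x * f x)) := by
    have := tendsto_setIntegral_of_monotone (μ := MeasureTheory.volume)
      (f := fun x => g' x * f x)
      (fun n => measurableSet_Ioo) hmono (hunion ▸ hRInt)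
    rwa [hunion] at this
  -- limits of the boundary terms
  have hHlim0 : Tendsto (fun n => H (u n)) atTop (nhds 0) := by
    have h1 : Tendsto (fun n => 1 - u n) atTop (nhds 1) := by
      have := (tendsto_const_nhds : Filter.Tendsto (fun _ : ℕ => (1:ℝ)) atTop (nhds 1)).sub hulim
      simpa using this
    have ha := ((Real.continuousAt_rpow_const 1 (1/α) (Or.inl one_ne_zero)).tendsto.comp h1)
    have hb := ((Real.continuousAt_rpow_const 1 (1/β) (Or.inl one_ne_zero)).tendsto.comp h1)
    have := ha.sub hb
    simpa [hH, Function.comp, Real.one_rpow] using this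
  have hHlim1 : Tendsto (fun n => H (v n)) atTop (nhds 0) := by
    have h1 : Tendsto (fun n => 1 - v n) atTop (nhds 0) := by
      have := (tendsto_const_nhds : Filter.Tendsto (fun _ : ℕ => (1:ℝ)) atTop (nhds 1)).sub hvlim
      simpa using this
    have ha := ((Real.continuousAt_rpow_const 0 (1/α) (Or.inr (by positivity))).tendsto.comp h1)
    have hb := ((Real.continuousAt_rpow_const 0 (1/β) (Or.inr (by positivity))).tendsto.comp h1)
    have h2 := ha.sub hb
    have h0 : (0:ℝ) ^ (1/α) - (0:ℝ) ^ (1/β) = 0 := by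
      rw [Real.zero_rpow (by positivity : (0:ℝ) < 1/α).ne',
        Real.zero_rpow (by positivity : (0:ℝ) < 1/β).ne', sub_zero]
    rw [h0] at h2
    simpa [hH, Function.comp] using h2
  have hΦbound : ∀ x ∈ Ioo (0:ℝ) 1, ‖Φ x‖ ≤ |H x| * (|g1| + C) := by
    intro x hx
    rw [hΦ]
    dsimp only
    rw [norm_mul]
    apply mul_le_mul_of_nonneg_left _ (abs_nonneg _)
    calc ‖g1 - g x‖ ≤ |g1| + |g x| := abs_sub _ _
      _ ≤ |g1| + C := by linarith [hC x hx]
  have hΦu : Tendsto (fun n => Φ (u n)) atTop (nhds 0) := by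
    apply squeeze_zero_norm (a := fun n => |H (u n)| * (|g1| + C))
    · intro n
      exact hΦbound (u n) ⟨hupos n, by linarith [huhalf n]⟩
    · have := (hHlim0.abs).mul_const (|g1| + C)
      simpa using this
  have hΦv : Tendsto (fun n => Φ (v n)) atTop (nhds 0) := by
    apply squeeze_zero_norm (a := fun n => |H (v n)| * (|g1| + C))
    · intro n
      refine hΦbound (v n) ⟨?_, hv1 n⟩
      have := huhalf n
      rw [hvdef]; dsimp only; rw [hudef] at this; linarith
    · have := (hHlim1.abs).mul_const (|g1| + C)
      simpa using this
  -- combine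
  have hIooint : ∀ (F : ℝ → ℝ) n, (∫ x in (u n)..(v n), F x) = ∫ x in Ioo (u n) (v n), F x := by
    intro F n
    rw [integral_of_le (huv n), MeasureTheory.integral_Ioc_eq_integral_Ioo]
  have heq : ∀ n, (∫ x in Ioo (u n) (v n), w x * (g1 - g x)) =
      (Φ (v n) - Φ (u n)) + (∫ x in Ioo (u n) (v n), g' x * f x) * c := by
    intro n
    rw [← hIooint, ← hIooint]
    exact key (u n) (v n) (hupos n) (huv n) (hv1 n)
  have htendR' : Tendsto (fun n => (Φ (v n) - Φ (u n)) +
      (∫ x in Ioo (u n) (v n), g' x * f x) * c) atTop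
      (nhds ((0 - 0) + (∫ x in Ioo (0:ℝ) 1, g' x * f x) * c)) :=
    ((hΦv.sub hΦu).add (htendR.mul_const c))
  have hfinal : (∫ x in Ioo (0:ℝ) 1, w x * (g1 - g x)) =
      (∫ x in Ioo (0:ℝ) 1, g' x * f x) * c := by
    have := tendsto_nhds_unique (htendL.congr fun n => (heq n).symm ▸ rfl) htendR'
    · simpa using (tendsto_nhds_unique
        (Tendsto.congr (fun n => (heq n)) htendL) htendR')
  rw [integral_of_le (by norm_num : (0:ℝ) ≤ 1), MeasureTheory.integral_Ioc_eq_integral_Ioo,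
    integral_of_le (by norm_num : (0:ℝ) ≤ 1), MeasureTheory.integral_Ioc_eq_integral_Ioo]
  exact hfinal
end

section
/- For integers 1 ≤ n < m and harmonic numbers H_k = ∑_{j=1}^k 1/j, the function f(x) = (1/(H_m − H_n)) · log((1 − x^{1/n})/(1 − x^{1/m})), 0 < x < 1, is a probability density on (0,1): f(x) ≥ 0 for all x ∈ (0,1) and ∫₀¹ f(x) dx = 1. -/
open Set intervalIntegral

/-!
Substituting `x = t ^ k` turns `∫₀¹ log (1 - x ^ (1/k)) dx` into `∫₀¹ k t ^ (k-1) log (1 - t) dt`,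
which has the explicit primitive `G(t) = (t ^ k - 1) log (1 - t) - ∑_{j<k} t ^ (j+1) / (j+1)`, so
the integral is `G(1) - G(0) = -H_k`. Here `G` is continuous on all of `ℝ`, since
`(t ^ k - 1) log (1 - t) = -(1 + t + ⋯ + t ^ (k-1)) (1 - t) log (1 - t)` and `u log u → 0`; and since
the integrand has constant sign, its integrability comes for free. Hence `∫₀¹ f = 1`, while
`f ≥ 0` because `x ^ (1/n) ≤ x ^ (1/m)` on `(0, 1)`.
-/

open Real
open Finset (range)

theorem harmonic_strictMono : StrictMono harmonic :=
  strictMono_nat_of_lt_succ fun n => by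
    rw [harmonic_succ]
    exact lt_add_of_pos_right _ (by positivity)

theorem one_sub_rpow_pos {x r : ℝ} (hx0 : 0 ≤ x) (hx1 : x < 1) (hr : 0 < r) : 0 < 1 - x ^ r :=
  sub_pos.mpr (rpow_lt_one hx0 hx1 hr)

noncomputable def logOneSubPrimitive (k : ℕ) (t : ℝ) : ℝ :=
  (t ^ k - 1) * log (1 - t) - ∑ j ∈ range k, t ^ (j + 1) / (j + 1)

namespace logOneSubPrimitive

variable {k : ℕ}

theorem continuous : Continuous (logOneSubPrimitive k) := by
  have h : logOneSubPrimitive k = fun t =>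
      -(∑ j ∈ range k, t ^ j) * ((1 - t) * log (1 - t)) - ∑ j ∈ range k, t ^ (j + 1) / (j + 1) := by
    ext t
    rw [logOneSubPrimitive, ← geom_sum_mul]
    ring
  rw [h]
  have := continuous_mul_log.comp (continuous_sub_left (1 : ℝ))
  fun_prop

theorem hasDerivAt {t : ℝ} (ht : t ≠ 1) :
    HasDerivAt (logOneSubPrimitive k) (k * t ^ (k - 1) * log (1 - t)) t := by
  have ht' : 1 - t ≠ 0 := sub_ne_zero.mpr ht.symm
  have hlog : HasDerivAt (fun t => log (1 - t)) (-1 / (1 - t)) t := by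
    simpa using ((hasDerivAt_id t).const_sub 1).log ht'
  have hsum : HasDerivAt (fun t => ∑ j ∈ range k, t ^ (j + 1) / (j + 1 : ℝ))
      (∑ j ∈ range k, t ^ j) t := by
    refine HasDerivAt.fun_sum fun j _ => ?_
    refine ((hasDerivAt_pow (j + 1) t).div_const ((j : ℝ) + 1)).congr_deriv ?_
    push_cast
    field_simp
  refine ((((hasDerivAt_pow k t).sub_const 1).fun_mul hlog).fun_sub hsum).congr_deriv ?_
  have hgeom : t ^ k - 1 = -((∑ j ∈ range k, t ^ j) * (1 - t)) := by
    rw [← mul_neg, neg_sub, geom_sum_mul]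
  rw [hgeom]
  field_simp
  ring

theorem hasDerivAt_comp_rpow_inv (hk : k ≠ 0) {x : ℝ} (hx0 : 0 < x) (hx1 : x < 1) :
    HasDerivAt (fun x => logOneSubPrimitive k (x ^ (k⁻¹ : ℝ))) (log (1 - x ^ (k⁻¹ : ℝ))) x := by
  set t := x ^ (k⁻¹ : ℝ)
  have ht : t ≠ 1 := (rpow_lt_one hx0.le hx1 (by positivity)).ne
  refine ((hasDerivAt ht).comp x
    (hasDerivAt_rpow_const (p := (k⁻¹ : ℝ)) (Or.inl hx0.ne'))).congr_deriv ?_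
  have htk : t ^ (k - 1) * t = x := by
    rw [← pow_succ, Nat.sub_add_cancel (Nat.one_le_iff_ne_zero.mpr hk)]
    exact rpow_inv_natCast_pow hx0.le hk
  have hk' : (k : ℝ) ≠ 0 := Nat.cast_ne_zero.mpr hk
  rw [rpow_sub_one hx0.ne']
  change (k : ℝ) * t ^ (k - 1) * log (1 - t) * ((k : ℝ)⁻¹ * (t / x)) = log (1 - t)
  rw [show (k : ℝ) * t ^ (k - 1) * log (1 - t) * ((k : ℝ)⁻¹ * (t / x))
      = ((k : ℝ) * (k : ℝ)⁻¹) * ((t ^ (k - 1) * t) / x) * log (1 - t) by ring,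
    htk, mul_inv_cancel₀ hk', div_self hx0.ne', one_mul, one_mul]

end logOneSubPrimitive

section

variable {k : ℕ}

theorem intervalIntegrable_log_one_sub_rpow_inv (hk : k ≠ 0) :
    IntervalIntegrable (fun x => log (1 - x ^ (k⁻¹ : ℝ))) MeasureTheory.volume 0 1 := by
  have hcont : Continuous fun x => -logOneSubPrimitive k (x ^ (k⁻¹ : ℝ)) :=
    (logOneSubPrimitive.continuous.comp (continuous_rpow_const (by positivity))).neg
  have hnonneg : ∀ x ∈ Ioo (0 : ℝ) 1, 0 ≤ -log (1 - x ^ (k⁻¹ : ℝ)) := fun x hx =>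
    neg_nonneg.mpr <| log_nonpos (one_sub_rpow_pos hx.1.le hx.2 (by positivity)).le
      (sub_le_self _ (rpow_nonneg hx.1.le _))
  have := integrableOn_deriv_of_nonneg hcont.continuousOn
    (fun x hx => (logOneSubPrimitive.hasDerivAt_comp_rpow_inv hk hx.1 hx.2).neg) hnonneg
  rw [intervalIntegrable_iff_integrableOn_Ioc_of_le zero_le_one]
  simpa using this.neg

theorem integral_log_one_sub_rpow_inv (hk : k ≠ 0) :
    ∫ x in (0 : ℝ)..1, log (1 - x ^ (k⁻¹ : ℝ)) = -harmonic k := by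
  rw [integral_eq_sub_of_hasDerivAt_of_le zero_le_one
    (logOneSubPrimitive.continuous.comp (continuous_rpow_const (by positivity))).continuousOn
    (fun x hx => logOneSubPrimitive.hasDerivAt_comp_rpow_inv hk hx.1 hx.2)
    (intervalIntegrable_log_one_sub_rpow_inv hk)]
  simp [logOneSubPrimitive, harmonic, zero_rpow (inv_ne_zero (Nat.cast_ne_zero.mpr hk))]

end

theorem log_div_one_sub_rpow_nonneg {x a b : ℝ} (hx : x ∈ Ioo 0 1) (hb : 0 < b) (hba : b ≤ a) :
    0 ≤ log ((1 - x ^ a) / (1 - x ^ b)) := by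
  refine log_nonneg <| (one_le_div (one_sub_rpow_pos hx.1.le hx.2 hb)).mpr ?_
  linarith [rpow_le_rpow_of_exponent_ge hx.1 hx.2.le hba]

theorem log_div_one_sub_rpow_eq_sub {x a b : ℝ} (hx : x ∈ Icc 0 1) (ha : 0 < a) (hb : 0 < b) :
    log ((1 - x ^ a) / (1 - x ^ b)) = log (1 - x ^ a) - log (1 - x ^ b) := by
  rcases hx.2.eq_or_lt with rfl | hx1
  · -- at `x = 1` both sides are junk `0`: `0 / 0 = 0` and `log 0 = 0`
    simp
  · exact log_div (one_sub_rpow_pos hx.1 hx1 ha).ne' (one_sub_rpow_pos hx.1 hx1 hb).ne'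

/-- The function `f(x) = log((1-x^{1/n})/(1-x^{1/m}))/(H_m - H_n)` is a
probability density on `(0,1)`. -/
theorem log_ratio_density
    (n m : ℕ) (hn : 1 ≤ n) (hnm : n < m)
    (H : ℕ → ℝ) (hH : ∀ k, H k = ∑ j ∈ Finset.range k, (1 : ℝ) / (j + 1))
    (f : ℝ → ℝ)
    (hf : ∀ x, f x = (1 / (H m - H n)) *
      Real.log ((1 - x ^ ((1:ℝ)/n)) / (1 - x ^ ((1:ℝ)/m)))) :
    (∀ x ∈ Ioo (0:ℝ) 1, 0 ≤ f x) ∧ (∫ x in (0:ℝ)..1, f x) = 1 := by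
  have hn0 : n ≠ 0 := by omega
  have hm0 : m ≠ 0 := by omega
  have hH_eq : ∀ k, H k = harmonic k := fun k => by simp [hH, harmonic]
  have hgap : 0 < H m - H n := by
    rw [hH_eq, hH_eq, sub_pos]
    exact_mod_cast harmonic_strictMono hnm
  simp only [one_div] at hf
  refine ⟨fun x hx => ?_, ?_⟩
  · rw [hf]
    exact mul_nonneg (inv_nonneg.mpr hgap.le) (log_div_one_sub_rpow_nonneg hx (by positivity)
      (inv_anti₀ (by positivity) (by exact_mod_cast hnm.le)))
  · have hf_sub : ∀ x ∈ uIcc (0 : ℝ) 1,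
        f x = (H m - H n)⁻¹ * (log (1 - x ^ (n⁻¹ : ℝ)) - log (1 - x ^ (m⁻¹ : ℝ))) := by
      intro x hx
      rw [uIcc_of_le zero_le_one] at hx
      rw [hf, log_div_one_sub_rpow_eq_sub hx (by positivity) (by positivity)]
    rw [integral_congr hf_sub, integral_const_mul,
      integral_sub (intervalIntegrable_log_one_sub_rpow_inv hn0)
        (intervalIntegrable_log_one_sub_rpow_inv hm0),
      integral_log_one_sub_rpow_inv hn0, integral_log_one_sub_rpow_inv hm0, ← hH_eq, ← hH_eq,
      neg_sub_neg, inv_mul_cancel₀ hgap.ne']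
end
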